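/- arXiv:1412.4800 — 4 statements merged into one kernel-verified Lean document; each statement's English description precedes it below -/
import Mathlib

section
/- Let A and C be groups and B a subgroup contained both in the centre Z(A) and in the centre Z(C), and form the free product with amalgamation A *_B C. If h ∈ A with h ∉ B, and g ∈ A *_B C with g ∉ A, then g·h·g⁻¹ ∉ A. -/
/-!
Identify the amalgam with Mathlib's `Monoid.PushoutI` of the two inclusions of `B` and write
`g = b * w` with `b ∈ B` and `w` a reduced word. Replacing `g` by `a₁ * g * a₂` and `h` by
`a₂ * h * a₂⁻¹` with `a₁, a₂ ∈ A` changes nothing (the new `h` stays outside `B` because `B` is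
normal in `A`), so the letters of `w` from `A` at either end may be absorbed. Then `w` is nonempty,
as `g ∉ A`, and begins and ends outside `A`, so `w h w⁻¹` is again a reduced word whose last letter
is outside `A`. Such a word cannot represent an element `a ∈ A`: either `a ∈ B`, or appending the
letter `a⁻¹` yields a nonempty reduced word representing `1`; both contradict the normal form
theorem for amalgamated products.
-/

universe u

/-- `P` is the free product of its subgroups `A` and `C` with amalgamated central
subgroup `B` (i.e. the cocone of inclusions satisfies the universal property of the
pushout of the two inclusions `B → A` and `B → C`). -/
structure IsCentralAmalgam {P : Type u} [Group P] (A C B : Subgroup P) : Prop where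
  B_le_A : B ≤ A
  B_le_C : B ≤ C
  central_A : ∀ b ∈ B, ∀ a ∈ A, b * a = a * b
  central_C : ∀ b ∈ B, ∀ c ∈ C, b * c = c * b
  isPushout : ∀ (K : Type u) [Group K] (f : ↥A →* K) (g : ↥C →* K),
      (∀ (b : P) (hb : b ∈ B), f ⟨b, B_le_A hb⟩ = g ⟨b, B_le_C hb⟩) →
      ∃! φ : P →* K, φ.comp A.subtype = f ∧ φ.comp C.subtype = g

theorem Subgroup.IsComplement.eq_one_of_mem_of_mem {G : Type*} [Group G] {S T : Set G}
    (hST : Subgroup.IsComplement S T) (hS : 1 ∈ S) (hT : 1 ∈ T) {g : G} (hgS : g ∈ S)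
    (hgT : g ∈ T) : g = 1 := by
  have h := hST.equiv_snd_eq_self_of_mem_of_one_mem hS hgT
  rw [hST.equiv_snd_eq_one_of_mem_of_one_mem hT hgS] at h
  exact (congrArg Subtype.val h).symm

namespace Monoid.PushoutI

open CoprodI

variable {ι : Type*} {G : ι → Type*} [∀ i, Group (G i)] {H : Type*} [Group H]
  {φ : ∀ i, H →* G i}

variable (φ) in
def prodLetters (l : List (Σ i, G i)) : PushoutI φ :=
  (l.map fun p => of p.1 p.2).prod

@[simp]
theorem prodLetters_nil : prodLetters φ ([] : List (Σ i, G i)) = 1 := rfl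

@[simp]
theorem prodLetters_cons (p : Σ i, G i) (l : List (Σ i, G i)) :
    prodLetters φ (p :: l) = of p.1 p.2 * prodLetters φ l := by
  simp [prodLetters]

@[simp]
theorem prodLetters_append (l₁ l₂ : List (Σ i, G i)) :
    prodLetters φ (l₁ ++ l₂) = prodLetters φ l₁ * prodLetters φ l₂ := by
  simp [prodLetters]

theorem ofCoprodI_word_prod (w : Word G) : ofCoprodI w.prod = prodLetters φ w.toList := by
  simp [Word.prod, prodLetters, map_list_prod, Function.comp_def]

def invRev (l : List (Σ i, G i)) : List (Σ i, G i) :=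
  (l.map fun p => ⟨p.1, p.2⁻¹⟩).reverse

@[simp]
theorem prodLetters_invRev (l : List (Σ i, G i)) :
    prodLetters φ (invRev l) = (prodLetters φ l)⁻¹ := by
  induction l with
  | nil => simp [invRev]
  | cons p l ih => simp_all [invRev]

@[simp]
theorem head?_invRev (l : List (Σ i, G i)) :
    (invRev l).head? = l.getLast?.map fun p => ⟨p.1, p.2⁻¹⟩ := by
  simp [invRev]

@[simp]
theorem getLast?_invRev (l : List (Σ i, G i)) :
    (invRev l).getLast? = l.head?.map fun p => ⟨p.1, p.2⁻¹⟩ := by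
  simp [invRev]

variable (φ) in
def IsReducedList (l : List (Σ i, G i)) : Prop :=
  l.IsChain (fun a b => a.1 ≠ b.1) ∧ ∀ p ∈ l, p.2 ∉ (φ p.1).range

theorem isReducedList_singleton {i : ι} {x : G i} (hx : x ∉ (φ i).range) :
    IsReducedList φ [⟨i, x⟩] :=
  ⟨List.isChain_singleton _, by simpa using hx⟩

variable {l l₁ l₂ : List (Σ i, G i)}

protected theorem IsReducedList.infix (hl : IsReducedList φ l) (h : l₁ <:+: l) :
    IsReducedList φ l₁ :=
  ⟨hl.1.infix h, fun p hp => hl.2 p (h.subset hp)⟩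

theorem IsReducedList.append (h₁ : IsReducedList φ l₁) (h₂ : IsReducedList φ l₂)
    (h : ∀ x ∈ l₁.getLast?, ∀ y ∈ l₂.head?, x.1 ≠ y.1) : IsReducedList φ (l₁ ++ l₂) :=
  ⟨h₁.1.append h₂.1 h, by simpa [or_imp, forall_and] using And.intro h₁.2 h₂.2⟩

theorem IsReducedList.invRev (hl : IsReducedList φ l) : IsReducedList φ (invRev l) := by
  refine ⟨List.isChain_reverse.2 ((List.isChain_map _).2 (hl.1.imp fun _ _ h => h.symm)), ?_⟩
  intro p hp
  obtain ⟨q, hq, rfl⟩ := List.mem_map.1 (List.mem_reverse.1 hp)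
  simpa using hl.2 q hq

theorem IsReducedList.eq_nil_of_mem_range_base (hφ : ∀ i, Function.Injective (φ i))
    (hl : IsReducedList φ l) (h : prodLetters φ l ∈ (base φ).range) : l = [] := by
  let w : Word G := ⟨l, fun p hp h1 => hl.2 p hp (h1 ▸ one_mem _), hl.1⟩
  have hw : Reduced φ w := hl.2
  rw [← show ofCoprodI w.prod = prodLetters φ l from ofCoprodI_word_prod w] at h
  simpa [w, Word.empty] using congrArg Word.toList (hw.eq_empty_of_mem_range hφ h)

theorem IsReducedList.eq_nil_of_mem_range_of (hφ : ∀ i, Function.Injective (φ i))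
    (hl : IsReducedList φ l) {j : ι} (hlast : ∀ p ∈ l.getLast?, p.1 ≠ j)
    (h : prodLetters φ l ∈ (of j).range) : l = [] := by
  obtain ⟨a, ha⟩ := h
  by_cases har : a ∈ (φ j).range
  · obtain ⟨b, rfl⟩ := har
    exact hl.eq_nil_of_mem_range_base hφ ⟨b, by rw [← ha, of_apply_eq_base]⟩
  · have hl' : IsReducedList φ (l ++ [⟨j, a⁻¹⟩]) :=
      hl.append (isReducedList_singleton (by simpa using har)) (by simpa using hlast)
    have := hl'.eq_nil_of_mem_range_base hφ ⟨1, by simp [← ha]⟩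
    simp at this

theorem IsReducedList.conj_not_mem_range_of (hφ : ∀ i, Function.Injective (φ i))
    (hl : IsReducedList φ l) (hne : l ≠ []) {j : ι} (hhead : ∀ p ∈ l.head?, p.1 ≠ j)
    (hlast : ∀ p ∈ l.getLast?, p.1 ≠ j) {h : G j} (hh : h ∉ (φ j).range) :
    prodLetters φ l * of j h * (prodLetters φ l)⁻¹ ∉ (of j).range := by
  intro hmem
  set L : List (Σ i, G i) := l ++ [⟨j, h⟩] ++ PushoutI.invRev l
  have hL : IsReducedList φ L :=
    (hl.append (isReducedList_singleton hh) (by simpa using hlast)).append hl.invRev (by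
      rintro x hx y hy
      rw [List.getLast?_concat, Option.mem_some_iff] at hx
      rw [head?_invRev] at hy
      obtain ⟨q, hq, rfl⟩ := Option.mem_map.1 hy
      subst hx
      exact (hlast q hq).symm)
  have hL_last : ∀ p ∈ L.getLast?, p.1 ≠ j := by
    rintro p hp
    rw [List.getLast?_append_of_ne_nil _ (by simpa [PushoutI.invRev] using hne),
      getLast?_invRev] at hp
    obtain ⟨q, hq, rfl⟩ := Option.mem_map.1 hp
    exact hhead q hq
  have := hL.eq_nil_of_mem_range_of hφ hL_last (by simpa [L, mul_assoc] using hmem)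
  simp [L] at this

theorem exists_suffix_prodLetters_eq_of_mul
    (hl : l.IsChain (fun a b => a.1 ≠ b.1)) (j : ι) :
    ∃ (a : G j) (l' : List (Σ i, G i)), l' <:+ l ∧ (∀ p ∈ l'.head?, p.1 ≠ j) ∧
      prodLetters φ l = of j a * prodLetters φ l' := by
  match l, hl with
  | [], _ => exact ⟨1, [], List.suffix_refl _, by simp, by simp⟩
  | ⟨i, x⟩ :: t, hl =>
    by_cases hij : i = j
    · subst hij
      exact ⟨x, t, List.suffix_cons _ _, fun p hp => ((List.isChain_cons.1 hl).1 p hp).symm,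
        by simp⟩
    · exact ⟨1, ⟨i, x⟩ :: t, List.suffix_refl _, by simpa using hij, by simp⟩

theorem exists_prefix_prodLetters_eq_mul_of
    (hl : l.IsChain (fun a b => a.1 ≠ b.1)) (j : ι) :
    ∃ (a : G j) (l' : List (Σ i, G i)), l' <+: l ∧ (∀ p ∈ l'.getLast?, p.1 ≠ j) ∧
      prodLetters φ l = prodLetters φ l' * of j a := by
  rcases List.eq_nil_or_concat l with rfl | ⟨t, ⟨i, x⟩, rfl⟩
  · exact ⟨1, [], List.prefix_refl _, by simp, by simp⟩
  rw [List.concat_eq_append] at hl ⊢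
  by_cases hij : i = j
  · subst hij
    refine ⟨x, t, List.prefix_append _ _, fun p hp => ?_, by simp⟩
    exact (List.isChain_append.1 hl).2.2 p hp ⟨i, x⟩ rfl
  · exact ⟨1, t ++ [⟨i, x⟩], List.prefix_refl _, by simpa using hij, by simp⟩

theorem IsReducedList.exists_prodLetters_eq_of_mul_mul_of (hl : IsReducedList φ l) (j : ι) :
    ∃ (a₁ a₂ : G j) (l' : List (Σ i, G i)), IsReducedList φ l' ∧
      (∀ p ∈ l'.head?, p.1 ≠ j) ∧ (∀ p ∈ l'.getLast?, p.1 ≠ j) ∧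
      prodLetters φ l = of j a₁ * prodLetters φ l' * of j a₂ := by
  obtain ⟨a₁, l₁, hl₁, hhead₁, e₁⟩ := exists_suffix_prodLetters_eq_of_mul (φ := φ) hl.1 j
  obtain ⟨a₂, l₂, hl₂, hlast, e₂⟩ :=
    exists_prefix_prodLetters_eq_mul_of (φ := φ) (hl.1.suffix hl₁) j
  refine ⟨a₁, a₂, l₂, hl.infix (hl₂.isInfix.trans hl₁.isInfix), fun p hp => ?_, hlast,
    by rw [e₁, e₂, mul_assoc]⟩
  obtain ⟨l₃, rfl⟩ := hl₂
  rw [List.head?_append_of_ne_nil _ (List.ne_nil_of_mem (List.mem_of_mem_head? hp))] at hhead₁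
  exact hhead₁ p hp

theorem exists_isReducedList_eq_base_mul (hφ : ∀ i, Function.Injective (φ i))
    (g : PushoutI φ) :
    ∃ (b : H) (l : List (Σ i, G i)), IsReducedList φ l ∧ g = base φ b * prodLetters φ l := by
  classical
  obtain ⟨d⟩ := NormalWord.transversal_nonempty φ hφ
  let w : NormalWord d := g • NormalWord.empty
  refine ⟨w.head, w.toList, ⟨w.chain_ne, fun p hp hrange => ?_⟩, ?_⟩
  · obtain ⟨b, hb⟩ := hrange
    exact w.ne_one p hp ((d.compl p.1).eq_one_of_mem_of_mem (one_mem _) (d.one_mem p.1)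
      ⟨b, hb⟩ (w.normalized p.1 p.2 hp))
  · rw [← ofCoprodI_word_prod, ← NormalWord.prod]
    simp [w]

theorem conj_not_mem_range_of (hφ : ∀ i, Function.Injective (φ i)) {j : ι}
    (hN : (φ j).range.Normal) {h : G j} (hh : h ∉ (φ j).range) {g : PushoutI φ}
    (hg : g ∉ (of j).range) : g * of j h * g⁻¹ ∉ (of j).range := by
  obtain ⟨b, l, hl, rfl⟩ := exists_isReducedList_eq_base_mul hφ g
  obtain ⟨a₁, a₂, l', hl', hhead, hlast, e⟩ := hl.exists_prodLetters_eq_of_mul_mul_of j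
  set c := base φ b * of j a₁
  have hc : c ∈ (of j).range := ⟨φ j b * a₁, by simp [c, of_apply_eq_base]⟩
  have hl'_ne : l' ≠ [] := by
    rintro rfl
    exact hg (by simpa [e, ← mul_assoc] using mul_mem hc ⟨a₂, rfl⟩)
  have hh' : a₂ * h * a₂⁻¹ ∉ (φ j).range := fun hmem =>
    hh (by simpa [mul_assoc] using hN.conj_mem' _ hmem a₂)
  intro hconj
  refine hl'.conj_not_mem_range_of hφ hl'_ne hhead hlast hh' ?_
  have key : prodLetters φ l' * of j (a₂ * h * a₂⁻¹) * (prodLetters φ l')⁻¹ =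
      c⁻¹ * ((base φ b * prodLetters φ l) * of j h * (base φ b * prodLetters φ l)⁻¹) * c := by
    rw [e]
    simp only [c, map_mul, map_inv]
    group
  rw [key]
  exact mul_mem (mul_mem (inv_mem hc) hconj) hc

end Monoid.PushoutI

namespace IsCentralAmalgam

open Monoid Monoid.PushoutI

variable {P : Type u} [Group P] {A C B : Subgroup P}

def inclusions (hAm : IsCentralAmalgam A C B) (i : Bool) : ↥B →* ↥(cond i A C) :=
  Subgroup.inclusion (by cases i; exacts [hAm.B_le_C, hAm.B_le_A])

theorem inclusions_injective (hAm : IsCentralAmalgam A C B) (i : Bool) :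
    Function.Injective (hAm.inclusions i) :=
  Subgroup.inclusion_injective _

theorem mem_range_inclusions_true (hAm : IsCentralAmalgam A C B) {a : ↥A} :
    a ∈ (hAm.inclusions true).range ↔ (a : P) ∈ B :=
  ⟨fun ⟨b, hb⟩ => hb ▸ b.2, fun ha => ⟨⟨a, ha⟩, rfl⟩⟩

theorem range_inclusions_true_normal (hAm : IsCentralAmalgam A C B) :
    (hAm.inclusions true).range.Normal where
  conj_mem x hx a := by
    rw [hAm.mem_range_inclusions_true] at hx ⊢
    rw [Subgroup.coe_mul, Subgroup.coe_mul, Subgroup.coe_inv, ← hAm.central_A x hx a a.2,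
      mul_inv_cancel_right]
    exact hx

theorem existsUnique_comp_subtype_eq_of (hAm : IsCentralAmalgam A C B) :
    ∃! σ : P →* PushoutI hAm.inclusions,
      σ.comp A.subtype = of (φ := hAm.inclusions) true ∧
        σ.comp C.subtype = of (φ := hAm.inclusions) false :=
  hAm.isPushout _ (of (φ := hAm.inclusions) true) (of (φ := hAm.inclusions) false)
    fun b hb => (of_apply_eq_base hAm.inclusions true ⟨b, hb⟩).trans
      (of_apply_eq_base hAm.inclusions false ⟨b, hb⟩).symm

noncomputable def toPushoutI (hAm : IsCentralAmalgam A C B) : P →* PushoutI hAm.inclusions :=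
  hAm.existsUnique_comp_subtype_eq_of.exists.choose

theorem toPushoutI_comp_subtype (hAm : IsCentralAmalgam A C B) :
    hAm.toPushoutI.comp A.subtype = of (φ := hAm.inclusions) true ∧
      hAm.toPushoutI.comp C.subtype = of (φ := hAm.inclusions) false :=
  hAm.existsUnique_comp_subtype_eq_of.exists.choose_spec

theorem toPushoutI_injective (hAm : IsCentralAmalgam A C B) :
    Function.Injective hAm.toPushoutI := by
  let π : PushoutI hAm.inclusions →* P :=
    lift (φ := hAm.inclusions) (fun i => (cond i A C).subtype) B.subtype
      (by rintro (_ | _) <;> rfl)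
  have hπ : π.comp hAm.toPushoutI = MonoidHom.id P := by
    refine (hAm.isPushout P A.subtype C.subtype fun _ _ => rfl).unique ⟨?_, ?_⟩ ⟨rfl, rfl⟩
    · rw [MonoidHom.comp_assoc, hAm.toPushoutI_comp_subtype.1]; ext; simp [π]
    · rw [MonoidHom.comp_assoc, hAm.toPushoutI_comp_subtype.2]; ext; simp [π]
  exact Function.LeftInverse.injective (g := π) (DFunLike.congr_fun hπ)

theorem toPushoutI_of_mem (hAm : IsCentralAmalgam A C B) {a : P} (ha : a ∈ A) :
    hAm.toPushoutI a = of true ⟨a, ha⟩ :=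
  DFunLike.congr_fun hAm.toPushoutI_comp_subtype.1 ⟨a, ha⟩

end IsCentralAmalgam

/-- If `h ∈ A`, `h ∉ B` and `g ∉ A`, then `g * h * g⁻¹ ∉ A`. -/
theorem conj_not_mem_of_isCentralAmalgam {P : Type u} [Group P]
    {A C B : Subgroup P} (hAm : IsCentralAmalgam A C B)
    {h : P} (hhA : h ∈ A) (hhB : h ∉ B) {g : P} (hgA : g ∉ A) :
    g * h * g⁻¹ ∉ A := by
  intro hconj
  have hg : hAm.toPushoutI g ∉ (Monoid.PushoutI.of true).range := by
    rintro ⟨a, ha⟩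
    rw [← hAm.toPushoutI_of_mem a.2] at ha
    exact hgA (hAm.toPushoutI_injective ha ▸ a.2)
  refine Monoid.PushoutI.conj_not_mem_range_of hAm.inclusions_injective
    hAm.range_inclusions_true_normal (h := ⟨h, hhA⟩)
    (mt hAm.mem_range_inclusions_true.1 hhB) hg ⟨⟨_, hconj⟩, ?_⟩
  rw [← hAm.toPushoutI_of_mem hconj, ← hAm.toPushoutI_of_mem hhA, map_mul, map_mul, map_inv]
end

section
/- In the setting of the iterated central amalgamation: if a subgroup H of G is spread out, then every non-trivial normal subgroup N of H is spread out. -/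
universe u

/-- The subgroup `D` of `G` is the free product of its subgroups `A` and `C` with
amalgamated central subgroup `B`: the cocone of inclusions satisfies the universal
property of the pushout of the two inclusions `B → A` and `B → C`. -/
structure IsCentralAmalgamIn {G : Type u} [Group G] (A C B D : Subgroup G) : Prop where
  A_le : A ≤ D
  C_le : C ≤ D
  B_le_A : B ≤ A
  B_le_C : B ≤ C
  central_A : ∀ b ∈ B, ∀ a ∈ A, b * a = a * b
  central_C : ∀ b ∈ B, ∀ c ∈ C, b * c = c * b
  isPushout : ∀ (K : Type u) [Group K] (f : ↥A →* K) (g : ↥C →* K),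
      (∀ (b : G) (hb : b ∈ B), f ⟨b, B_le_A hb⟩ = g ⟨b, B_le_C hb⟩) →
      ∃! φ : ↥D →* K,
        φ.comp (Subgroup.inclusion A_le) = f ∧ φ.comp (Subgroup.inclusion C_le) = g

/-- The setting of the iterated central amalgamation
`G = ⋃_n (H₀ *_{B₀} H₁ *_{B₁} ⋯ *_{B_{n-1}} H_n)`:
`B₀ ⊇ B₁ ⊇ ⋯` is a descending sequence of groups with `⋂_n B_n = 1`; for each `n`,
`B_n` is a central subgroup of both `H_n` and `H_{n+1}` with `B_n ≠ H_n` and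
`B_n ≠ H_{n+1}`; `G₀ = H₀`, `G_{n+1} = G_n *_{B_n} H_{n+1}` (free product with central
amalgamation) and `G = ⋃_n G_n`.  All groups are realized as subgroups of `G`. -/
structure IteratedAmalgam (G : Type u) [Group G] where
  Gn : ℕ → Subgroup G
  Hn : ℕ → Subgroup G
  Bn : ℕ → Subgroup G
  B_antitone : ∀ n, Bn (n + 1) ≤ Bn n
  B_iInf : ⨅ n, Bn n = ⊥
  B_le_H : ∀ n, Bn n ≤ Hn n
  B_le_H_succ : ∀ n, Bn n ≤ Hn (n + 1)
  B_central_H : ∀ n, ∀ b ∈ Bn n, ∀ h ∈ Hn n, b * h = h * b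
  B_central_H_succ : ∀ n, ∀ b ∈ Bn n, ∀ h ∈ Hn (n + 1), b * h = h * b
  B_ne_H : ∀ n, Bn n ≠ Hn n
  B_ne_H_succ : ∀ n, Bn n ≠ Hn (n + 1)
  G_zero : Gn 0 = Hn 0
  amalgam : ∀ n, IsCentralAmalgamIn (Gn n) (Hn (n + 1)) (Bn n) (Gn (n + 1))
  iSup_G : ⨆ n, Gn n = ⊤

/-- A subgroup `H` of `G` is *spread out* if `H ⊄ G_n` for every `n`. -/
def IteratedAmalgam.SpreadOut {G : Type u} [Group G] (S : IteratedAmalgam G)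
    (H : Subgroup G) : Prop :=
  ∀ n : ℕ, ¬ H ≤ S.Gn n

/-!
Work in the pushout `D = A *_B C` with `B` central. Writing an element `p ∉ A` as
`w · c` with `w` a nonempty reduced word ending outside `A` and `c ∈ A`, the conjugate
`p x p⁻¹` of `x ∈ A \ B` is represented by the reduced word `w · (c x c⁻¹) · w⁻¹` of length
at least three, so it does not lie in `A`. Along the tower `G₀ ≤ G₁ ≤ ⋯` this shows that
conjugating `x ∈ Gₖ \ Bₖ` by any `g ∉ Gₖ` leaves `Gₖ`. Now if `N ≤ Gₙ`, pick `x ∈ N \ {1}`,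
choose `k ≥ n` with `x ∉ Bₖ` (as `⋂ Bₘ = 1`), and `g ∈ H \ Gₖ`: then `g x g⁻¹ ∈ N ≤ Gₖ`,
a contradiction.
-/

namespace Monoid.PushoutI

open CoprodI

variable {ι : Type*} {H : Type*} {G : ι → Type*} [Group H] [∀ i, Group (G i)]
  {φ : ∀ i, H →* G i}

variable (φ) in
def lettersProd (l : List (Σ i, G i)) : PushoutI φ :=
  (l.map fun x => of x.1 x.2).prod

variable (φ) in
def IsReducedLetters (l : List (Σ i, G i)) : Prop :=
  l.IsChain (fun x y => x.1 ≠ y.1) ∧ ∀ x ∈ l, x.2 ∉ (φ x.1).range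

def invLetters (l : List (Σ i, G i)) : List (Σ i, G i) :=
  (l.map fun x => ⟨x.1, x.2⁻¹⟩).reverse

@[simp]
theorem lettersProd_nil : lettersProd φ ([] : List (Σ i, G i)) = 1 := rfl

@[simp]
theorem lettersProd_cons (x : Σ i, G i) (l : List (Σ i, G i)) :
    lettersProd φ (x :: l) = of x.1 x.2 * lettersProd φ l := List.prod_cons

@[simp]
theorem lettersProd_append (l₁ l₂ : List (Σ i, G i)) :
    lettersProd φ (l₁ ++ l₂) = lettersProd φ l₁ * lettersProd φ l₂ := by
  simp [lettersProd]

@[simp]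
theorem lettersProd_invLetters (l : List (Σ i, G i)) :
    lettersProd φ (invLetters l) = (lettersProd φ l)⁻¹ := by
  induction l with
  | nil => simp [invLetters]
  | cons x l ih => simp_all [invLetters]

theorem head?_invLetters (l : List (Σ i, G i)) :
    (invLetters l).head? = l.getLast?.map fun x => ⟨x.1, x.2⁻¹⟩ := by
  simp [invLetters, List.head?_reverse, List.getLast?_map]

theorem isReducedLetters_append {l₁ l₂ : List (Σ i, G i)} :
    IsReducedLetters φ (l₁ ++ l₂) ↔ IsReducedLetters φ l₁ ∧ IsReducedLetters φ l₂ ∧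
      ∀ x ∈ l₁.getLast?, ∀ y ∈ l₂.head?, x.1 ≠ y.1 := by
  simp only [IsReducedLetters, List.isChain_append, List.mem_append]
  grind

@[simp]
theorem isReducedLetters_singleton {x : Σ i, G i} :
    IsReducedLetters φ [x] ↔ x.2 ∉ (φ x.1).range := by
  simp [IsReducedLetters]

theorem IsReducedLetters.invLetters {l : List (Σ i, G i)} (hl : IsReducedLetters φ l) :
    IsReducedLetters φ (invLetters l) := by
  refine ⟨?_, ?_⟩
  · simpa [PushoutI.invLetters, List.isChain_reverse, List.isChain_map, ne_comm] using hl.1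
  · simp only [PushoutI.invLetters, List.mem_reverse, List.mem_map]
    rintro _ ⟨x, hx, rfl⟩
    simpa using hl.2 x hx

theorem lettersProd_eq_ofCoprodI_prod {l : List (Σ i, G i)} (hl : IsReducedLetters φ l) :
    lettersProd φ l =
      ofCoprodI (Word.mk l (fun x hx h1 => hl.2 x hx (h1 ▸ one_mem _)) hl.1).prod := by
  rw [Word.prod, map_list_prod, List.map_map]
  rfl

theorem IsReducedLetters.lettersProd_notMem_range_base (hφ : ∀ i, Function.Injective (φ i))
    {l : List (Σ i, G i)} (hl : IsReducedLetters φ l) (hne : l ≠ []) :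
    lettersProd φ l ∉ (base φ).range := fun hmem =>
  hne (congrArg Word.toList (Reduced.eq_empty_of_mem_range hφ (fun x hx => hl.2 x hx)
    (lettersProd_eq_ofCoprodI_prod hl ▸ hmem)))

theorem IsReducedLetters.lettersProd_notMem_range_of (hφ : ∀ i, Function.Injective (φ i))
    {l : List (Σ i, G i)} (hl : IsReducedLetters φ l) (hne : l ≠ []) {k : ι}
    (hhead : ∀ x ∈ l.head?, x.1 ≠ k) : lettersProd φ l ∉ (of k).range := by
  rintro ⟨c, hc⟩
  by_cases hcφ : c ∈ (φ k).range
  · obtain ⟨h, rfl⟩ := hcφ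
    exact hl.lettersProd_notMem_range_base hφ hne ⟨h, by rw [← hc, of_apply_eq_base]⟩
  · have hred : IsReducedLetters φ ([⟨k, c⁻¹⟩] ++ l) :=
      isReducedLetters_append.2 ⟨by simpa using hcφ, hl, by simpa [eq_comm] using hhead⟩
    refine hred.lettersProd_notMem_range_base hφ (by simp) ⟨1, ?_⟩
    simp [← hc]

theorem IsReducedLetters.eq_singleton_of_lettersProd_mem_range_of
    (hφ : ∀ i, Function.Injective (φ i)) {l : List (Σ i, G i)} (hl : IsReducedLetters φ l)
    (hne : l ≠ []) {k : ι} (hk : lettersProd φ l ∈ (of k).range) : ∃ g : G k, l = [⟨k, g⟩] := by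
  obtain ⟨⟨i, g⟩, l, rfl⟩ := List.exists_cons_of_ne_nil hne
  obtain ⟨-, htail, hjunction⟩ := isReducedLetters_append (l₁ := [_]).1 hl
  by_cases hik : i = k
  · subst hik
    rcases eq_or_ne l [] with rfl | hl_ne
    · exact ⟨g, rfl⟩
    obtain ⟨c, hc⟩ := hk
    refine absurd ⟨g⁻¹ * c, ?_⟩ (htail.lettersProd_notMem_range_of hφ hl_ne fun y hy => ?_)
    · exact (hjunction ⟨i, g⟩ rfl y hy).symm
    · rw [map_mul, map_inv, hc, lettersProd_cons, inv_mul_cancel_left]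
  · exact absurd hk (hl.lettersProd_notMem_range_of hφ hne (by simpa using hik))

theorem exists_base_mul_lettersProd_eq (hφ : ∀ i, Function.Injective (φ i)) (p : PushoutI φ) :
    ∃ (h : H) (l : List (Σ i, G i)), IsReducedLetters φ l ∧ base φ h * lettersProd φ l = p := by
  classical
  obtain ⟨d⟩ := NormalWord.transversal_nonempty φ hφ
  set w : NormalWord d := p • NormalWord.empty
  refine ⟨w.head, w.toList, ⟨w.chain_ne, fun ⟨i, g⟩ hg hgφ => w.ne_one _ hg ?_⟩, ?_⟩
  · -- the letters lie in the transversal, which meets the base only in `1`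
    have := (d.compl i).equiv_snd_eq_self_of_mem_of_one_mem (one_mem _) (w.normalized i g hg)
    rw [(d.compl i).equiv_snd_eq_one_of_mem_of_one_mem (d.one_mem i) hgφ] at this
    exact (congrArg Subtype.val this).symm
  · have hw : w.prod = p := by rw [NormalWord.prod_smul, NormalWord.prod_empty, mul_one]
    rw [← hw, NormalWord.prod, Word.prod, map_list_prod, List.map_map]
    rfl

theorem commute_base_lettersProd (hc : ∀ i (h : H) (g : G i), Commute (φ i h) g) (h : H)
    (l : List (Σ i, G i)) : Commute (base φ h) (lettersProd φ l) :=
  Commute.list_prod_right _ _ fun _ hx => by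
    obtain ⟨⟨i, g⟩, -, rfl⟩ := List.mem_map.1 hx
    rw [← of_apply_eq_base φ i]
    exact (hc i h g).map (of i)

theorem exists_lettersProd_mul_of_eq (hφ : ∀ i, Function.Injective (φ i))
    (hc : ∀ i (h : H) (g : G i), Commute (φ i h) g) {i : ι} {p : PushoutI φ}
    (hp : p ∉ (of i).range) :
    ∃ (l : List (Σ i, G i)) (c : G i), IsReducedLetters φ l ∧ l ≠ [] ∧
      (∀ x ∈ l.getLast?, x.1 ≠ i) ∧ lettersProd φ l * of i c = p := by
  obtain ⟨h, l, hl, rfl⟩ := exists_base_mul_lettersProd_eq hφ p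
  rcases l.eq_nil_or_concat' with rfl | ⟨l, ⟨j, g⟩, rfl⟩
  · exact absurd ⟨φ i h, by simp [of_apply_eq_base]⟩ hp
  obtain ⟨hl', -, hjunction⟩ := isReducedLetters_append.1 hl
  by_cases hji : j = i
  · subst hji
    refine ⟨l, φ j h * g, hl', ?_, fun x hx => hjunction x hx ⟨j, g⟩ rfl, ?_⟩
    · rintro rfl
      exact hp ⟨φ j h * g, by simp [of_apply_eq_base]⟩
    · rw [map_mul, of_apply_eq_base, ← mul_assoc, ← (commute_base_lettersProd hc h l).eq]
      simp [mul_assoc]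
  · refine ⟨l ++ [⟨j, g⟩], φ i h, hl, by simp, by simpa using hji, ?_⟩
    rw [of_apply_eq_base, (commute_base_lettersProd hc h _).eq]

theorem conj_notMem_range_of (hφ : ∀ i, Function.Injective (φ i))
    (hc : ∀ i (h : H) (g : G i), Commute (φ i h) g) {i : ι} {a : G i} (ha : a ∉ (φ i).range)
    {p : PushoutI φ} (hp : p ∉ (of i).range) : p * of i a * p⁻¹ ∉ (of i).range := by
  obtain ⟨l, c, hl, hne, hlast, rfl⟩ := exists_lettersProd_mul_of_eq hφ hc hp
  have hca : c * a * c⁻¹ ∉ (φ i).range := by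
    rintro ⟨h, hh⟩
    refine ha ⟨h, ?_⟩
    calc φ i h = c⁻¹ * (φ i h * c) := by rw [(hc i h c).eq, inv_mul_cancel_left]
      _ = a := by rw [hh]; group
  set w := l ++ [⟨i, c * a * c⁻¹⟩] ++ invLetters l
  have hw : IsReducedLetters φ w := by
    refine isReducedLetters_append.2 ⟨isReducedLetters_append.2 ⟨hl, by simpa using hca, ?_⟩,
      hl.invLetters, ?_⟩
    · simpa using hlast
    · simp only [List.getLast?_append, List.getLast?_singleton, head?_invLetters]
      grind
  have hprod : lettersProd φ w =
      lettersProd φ l * of i c * of i a * (lettersProd φ l * of i c)⁻¹ := by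
    simp [w]
    group
  rw [← hprod]
  intro hmem
  obtain ⟨g, hg⟩ := hw.eq_singleton_of_lettersProd_mem_range_of hφ (by simp [w]) hmem
  have := congrArg List.length hg
  simp only [w, invLetters, List.length_append, List.length_singleton, List.length_reverse,
    List.length_map] at this
  exact hne (List.length_eq_zero_iff.1 (by omega))

end Monoid.PushoutI

namespace IsCentralAmalgamIn

open Monoid PushoutI

variable {Γ : Type u} [Group Γ] {A C B D : Subgroup Γ}

/-- The amalgam `A *_B C` is modelled as the `Bool`-indexed `PushoutI`, `true` standing for `A`
and `false` for `C`. -/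
def baseIncl (h : IsCentralAmalgamIn A C B D) : ∀ b : Bool, ↥B →* ↥(cond b A C)
  | true => Subgroup.inclusion h.B_le_A
  | false => Subgroup.inclusion h.B_le_C

def factorIncl (h : IsCentralAmalgamIn A C B D) : ∀ b : Bool, ↥(cond b A C) →* ↥D
  | true => Subgroup.inclusion h.A_le
  | false => Subgroup.inclusion h.C_le

theorem baseIncl_injective (h : IsCentralAmalgamIn A C B D) (b : Bool) :
    Function.Injective (h.baseIncl b) := by
  cases b
  · exact Subgroup.inclusion_injective h.B_le_C
  · exact Subgroup.inclusion_injective h.B_le_A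

theorem commute_baseIncl (h : IsCentralAmalgamIn A C B D) (b : Bool) (y : ↥B)
    (z : ↥(cond b A C)) : Commute (h.baseIncl b y) z := by
  cases b
  · exact Subtype.ext (h.central_C y y.2 z z.2)
  · exact Subtype.ext (h.central_A y y.2 z z.2)

theorem exists_mulEquiv_pushoutI (h : IsCentralAmalgamIn A C B D) :
    ∃ e : PushoutI h.baseIncl ≃* ↥D, ∀ b (a : ↥(cond b A C)), (e (of b a) : Γ) = a := by
  obtain ⟨χ, ⟨hχA, hχC⟩, -⟩ := h.isPushout (PushoutI h.baseIncl)
    (of (φ := h.baseIncl) true : ↥A →* _) (of (φ := h.baseIncl) false : ↥C →* _)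
    fun b hb => (of_apply_eq_base h.baseIncl true ⟨b, hb⟩).trans
      (of_apply_eq_base h.baseIncl false ⟨b, hb⟩).symm
  let ψ : PushoutI h.baseIncl →* ↥D :=
    lift h.factorIncl (Subgroup.inclusion (h.B_le_A.trans h.A_le)) fun b => by cases b <;> rfl
  have hψ : ∀ b (a : ↥(cond b A C)), ψ (of b a) = h.factorIncl b a := fun b a =>
    lift_of h.factorIncl _ _ a
  obtain ⟨θ, -, hθ⟩ := h.isPushout ↥D (Subgroup.inclusion h.A_le) (Subgroup.inclusion h.C_le)
    fun _ _ => rfl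
  have hψχ : ψ.comp χ = MonoidHom.id _ := by
    refine (hθ _ ⟨?_, ?_⟩).trans (hθ _ ⟨rfl, rfl⟩).symm
    · rw [MonoidHom.comp_assoc, hχA]
      exact MonoidHom.ext (hψ true)
    · rw [MonoidHom.comp_assoc, hχC]
      exact MonoidHom.ext (hψ false)
  have hχψ : χ.comp ψ = MonoidHom.id _ := by
    refine hom_ext_nonempty fun b => ?_
    cases b
    · exact MonoidHom.ext fun a => (congrArg χ (hψ false a)).trans (DFunLike.congr_fun hχC a)
    · exact MonoidHom.ext fun a => (congrArg χ (hψ true a)).trans (DFunLike.congr_fun hχA a)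
  exact ⟨MonoidHom.toMulEquiv ψ χ hχψ hψχ, fun b a => by cases b <;> simp [hψ, factorIncl]⟩

theorem conj_notMem (h : IsCentralAmalgamIn A C B D) {x : Γ} (hxA : x ∈ A) (hxB : x ∉ B)
    {g : Γ} (hgD : g ∈ D) (hgA : g ∉ A) : g * x * g⁻¹ ∉ A := by
  obtain ⟨e, he⟩ := h.exists_mulEquiv_pushoutI
  have mem_A_iff : ∀ p, (e p : Γ) ∈ A ↔ p ∈ (of (φ := h.baseIncl) true).range := by
    refine fun p => ⟨fun hp => ⟨⟨e p, hp⟩, e.injective (Subtype.ext (he true _))⟩, ?_⟩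
    rintro ⟨a, rfl⟩
    rw [he]
    exact a.2
  have hx : (⟨x, hxA⟩ : ↥A) ∉ (h.baseIncl true).range := by
    rintro ⟨y, hy⟩
    have hyx : (y : Γ) = x := congrArg Subtype.val hy
    exact hxB (hyx ▸ y.2)
  set p := e.symm ⟨g, hgD⟩
  have hconj : (e (p * of (φ := h.baseIncl) true ⟨x, hxA⟩ * p⁻¹) : Γ) = g * x * g⁻¹ := by
    simp [p, he]
  rw [← hconj, mem_A_iff]
  refine conj_notMem_range_of h.baseIncl_injective h.commute_baseIncl hx ?_
  rwa [← mem_A_iff, e.apply_symm_apply]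

end IsCentralAmalgamIn

namespace IteratedAmalgam

variable {Γ : Type u} [Group Γ] (S : IteratedAmalgam Γ)

theorem Gn_monotone : Monotone S.Gn :=
  monotone_nat_of_le_succ fun n => (S.amalgam n).A_le

theorem Bn_antitone : Antitone S.Bn :=
  antitone_nat_of_succ_le S.B_antitone

theorem exists_mem_Gn (g : Γ) : ∃ n, g ∈ S.Gn n :=
  (Subgroup.mem_iSup_of_directed S.Gn_monotone.directed_le).1 (S.iSup_G ▸ Subgroup.mem_top g)

theorem exists_notMem_Bn {x : Γ} (hx : x ≠ 1) : ∃ n, x ∉ S.Bn n := by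
  by_contra! h
  exact hx (by simpa [S.B_iInf] using Subgroup.mem_iInf.2 h)

theorem conj_notMem_Gn {k : ℕ} {x : Γ} (hxG : x ∈ S.Gn k) (hxB : x ∉ S.Bn k) {g : Γ}
    (hg : g ∉ S.Gn k) : g * x * g⁻¹ ∉ S.Gn k := by
  obtain ⟨K, hgK⟩ := S.exists_mem_Gn g
  induction K with
  | zero => exact absurd (S.Gn_monotone (Nat.zero_le k) hgK) hg
  | succ K ih =>
    by_cases hgK' : g ∈ S.Gn K
    · exact ih hgK'
    have hkK : k ≤ K := by
      by_contra! hKk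
      exact hg (S.Gn_monotone hKk hgK)
    exact fun hmem => (S.amalgam K).conj_notMem (S.Gn_monotone hkK hxG)
      (fun hx => hxB (S.Bn_antitone hkK hx)) hgK hgK' (S.Gn_monotone hkK hmem)

end IteratedAmalgam

theorem spreadOut_of_normal_of_spreadOut_general {G : Type u} [Group G]
    (S : IteratedAmalgam G) (H : Subgroup G) (hH : S.SpreadOut H)
    (N : Subgroup G)
    (hNnormal : ∀ g ∈ H, ∀ x ∈ N, g * x * g⁻¹ ∈ N)
    (hNbot : N ≠ ⊥) :
    S.SpreadOut N := by
  intro n hNn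
  obtain ⟨x, hxN, hx1⟩ := N.bot_or_exists_ne_one.resolve_left hNbot
  obtain ⟨m, hxm⟩ := S.exists_notMem_Bn hx1
  obtain ⟨g, hgH, hg⟩ := SetLike.not_le_iff_exists.1 (hH (max n m))
  have hNk : N ≤ S.Gn (max n m) := hNn.trans (S.Gn_monotone (le_max_left n m))
  exact S.conj_notMem_Gn (hNk hxN) (fun hx => hxm (S.Bn_antitone (le_max_right n m) hx)) hg
    (hNk (hNnormal g hgH x hxN))

/-- If a subgroup `H` of `G` is spread out, then every non-trivial normal subgroup
`N` of `H` is spread out. -/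
theorem spreadOut_of_normal_of_spreadOut {G : Type u} [Group G]
    (S : IteratedAmalgam G) (H : Subgroup G) (hH : S.SpreadOut H)
    (N : Subgroup G) (hNH : N ≤ H)
    (hNnormal : ∀ g ∈ H, ∀ x ∈ N, g * x * g⁻¹ ∈ N)
    (hNbot : N ≠ ⊥) :
    S.SpreadOut N :=
  spreadOut_of_normal_of_spreadOut_general S H hH N hNnormal hNbot
end

section
/- In the setting of the iterated central amalgamation: every non-trivial subnormal subgroup S of G is non-abelian and has trivial radical, i.e. every soluble normal subgroup of S is trivial. -/
universe u

/-- `S` is a subnormal subgroup of `H`: there is a finite chain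
`S = c 0 ⊴ c 1 ⊴ ⋯ ⊴ c m = H` of successive normal subgroups. -/
def Subnormal {G : Type u} [Group G] (S H : Subgroup G) : Prop :=
  ∃ (m : ℕ) (c : ℕ → Subgroup G), c 0 = S ∧ c m = H ∧
    ∀ i < m, c i ≤ c (i + 1) ∧ ∀ g ∈ c (i + 1), ∀ x ∈ c i, g * x * g⁻¹ ∈ c i

/-!
If `N` is subnormal of defect `m` and `t ∈ N`, then for every `u` the `m`-fold iterated
commutator `[u, t, …, t]` lies in `N`. For `t ≠ 1` choose `n` with `t ∈ G_n \ B_n` and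
`c ∈ H_{n+1} \ B_n`. Since `B_n` is central, `G_{n+1}` maps onto the free product
`G_n/B_n * H_{n+1}/B_n`, and there the iterated commutators of `c t c⁻¹` with `t` are
represented by non-empty reduced words, so they never vanish. Hence a non-trivial subnormal
subgroup is not abelian. A soluble one would have a non-trivial abelian last derived term,
which is again subnormal.
-/

open commutatorElement

section IteratedCommutator
variable {G : Type*} [Group G]

def iteratedCommutator (t u : G) : ℕ → G
  | 0 => u
  | k + 1 => ⁅iteratedCommutator t u k, t⁆

theorem map_iteratedCommutator {H : Type*} [Group H] (f : G →* H) (t u : G) (k : ℕ) :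
    f (iteratedCommutator t u k) = iteratedCommutator (f t) (f u) k := by
  induction k with
  | zero => rfl
  | succ k ih => simp only [iteratedCommutator, map_commutatorElement, ih]

end IteratedCommutator

namespace Monoid.CoprodI
variable {ι : Type*} {M : ι → Type*} [∀ i, Group (M i)]

theorem NeWord.prod_ne_one {i j : ι} (w : NeWord M i j) : w.prod ≠ 1 := by
  classical
  intro h
  have : w.toWord = Word.empty := Word.equiv.symm.injective (h.trans Word.prod_empty.symm)
  exact w.toList_ne_nil (congrArg Word.toList this)

theorem iteratedCommutator_conj_ne_one {i j : ι} (hij : i ≠ j) {x : M i} {y : M j}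
    (hx : x ≠ 1) (hy : y ≠ 1) (k : ℕ) :
    iteratedCommutator (of x) (of y * of x * (of y)⁻¹) k ≠ 1 := by
  let conj (z : NeWord M j j) : NeWord M j j :=
    (z.append hij.symm (.singleton x hx)).append hij z.inv
  have conj_prod (z : NeWord M j j) : (conj z).prod = z.prod * of x * z.prod⁻¹ := by
    simp [conj]
  let z₀ := conj (.singleton y hy)
  have key : ∀ k, ∃ z : NeWord M j j,
      iteratedCommutator (of x) (of y * of x * (of y)⁻¹) (k + 1) = z.prod * (of x)⁻¹ := by
    intro k
    induction k with
    | zero =>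
      refine ⟨conj z₀, ?_⟩
      simp only [iteratedCommutator, commutatorElement_def, conj_prod, z₀, NeWord.prod_singleton]
    | succ k ih =>
      obtain ⟨z, hz⟩ := ih
      refine ⟨conj z, ?_⟩
      rw [iteratedCommutator, hz, conj_prod, commutatorElement_def]
      simp only [mul_inv_rev, inv_inv, mul_assoc, inv_mul_cancel_left]
  cases k with
  | zero => simpa [iteratedCommutator, z₀, conj_prod] using z₀.prod_ne_one
  | succ k =>
    obtain ⟨z, hz⟩ := key k
    simpa [hz] using (z.append hij.symm (.singleton x⁻¹ (inv_ne_one.mpr hx))).prod_ne_one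

end Monoid.CoprodI

theorem Subgroup.subgroupOf_normal_of_commute {G : Type*} [Group G] {B P : Subgroup G}
    (h : ∀ b ∈ B, ∀ p ∈ P, b * p = p * b) : (B.subgroupOf P).Normal where
  conj_mem n hn g := by
    rw [Subgroup.mem_subgroupOf] at hn ⊢
    rw [Subgroup.coe_mul, Subgroup.coe_mul, Subgroup.coe_inv, ← h _ hn _ g.2,
      mul_inv_cancel_right]
    exact hn

namespace IsCentralAmalgamIn
open Monoid
variable {G : Type u} [Group G] {A C B D : Subgroup G}

theorem iteratedCommutator_ne_one (am : IsCentralAmalgamIn A C B D) {t c : G}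
    (ht : t ∈ A) (htB : t ∉ B) (hc : c ∈ C) (hcB : c ∉ B) (k : ℕ) :
    iteratedCommutator t (c * t * c⁻¹) k ≠ 1 := by
  let P : Bool → Subgroup G := fun i => cond i A C
  have : ∀ i, (B.subgroupOf (P i)).Normal
    | true => Subgroup.subgroupOf_normal_of_commute am.central_A
    | false => Subgroup.subgroupOf_normal_of_commute am.central_C
  let K := CoprodI fun i => P i ⧸ B.subgroupOf (P i)
  let f : A →* K := (CoprodI.of (i := true)).comp (QuotientGroup.mk' _)
  let g : C →* K := (CoprodI.of (i := false)).comp (QuotientGroup.mk' _)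
  have hfg (b : G) (hb : b ∈ B) : f ⟨b, am.B_le_A hb⟩ = g ⟨b, am.B_le_C hb⟩ := by
    have hb1 (i : Bool) (hbi : b ∈ P i) :
        QuotientGroup.mk' (B.subgroupOf (P i)) ⟨b, hbi⟩ = 1 :=
      (QuotientGroup.eq_one_iff _).mpr hb
    simp only [f, g, MonoidHom.comp_apply, hb1, map_one]
  obtain ⟨φ, ⟨hφf, hφg⟩, -⟩ := am.isPushout K f g hfg
  intro h
  let tD : D := ⟨t, am.A_le ht⟩
  let cD : D := ⟨c, am.C_le hc⟩
  have hD : iteratedCommutator tD (cD * tD * cD⁻¹) k = 1 :=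
    D.subtype_injective (by simpa [map_iteratedCommutator, tD, cD] using h)
  have hφt : φ tD = f ⟨t, ht⟩ := DFunLike.congr_fun hφf ⟨t, ht⟩
  have hφc : φ cD = g ⟨c, hc⟩ := DFunLike.congr_fun hφg ⟨c, hc⟩
  have hφD := congrArg φ hD
  rw [map_iteratedCommutator, map_one, map_mul, map_mul, map_inv, hφt, hφc] at hφD
  refine CoprodI.iteratedCommutator_conj_ne_one (by decide) ?_ ?_ k hφD
  · exact fun h => htB ((QuotientGroup.eq_one_iff (N := B.subgroupOf (P true)) ⟨t, ht⟩).mp h)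
  · exact fun h => hcB ((QuotientGroup.eq_one_iff (N := B.subgroupOf (P false)) ⟨c, hc⟩).mp h)

end IsCentralAmalgamIn

namespace Subnormal
variable {G : Type u} [Group G] {N T H : Subgroup G}

theorem of_le_of_conj_mem (hT : Subnormal T H) (hNT : N ≤ T)
    (hconj : ∀ g ∈ T, ∀ x ∈ N, g * x * g⁻¹ ∈ N) : Subnormal N H := by
  obtain ⟨m, c, hc0, hcm, hc⟩ := hT
  refine ⟨m + 1, fun i => Nat.casesOn i N c, rfl, hcm, fun i hi => ?_⟩
  cases i with
  | zero =>
    show N ≤ c 0 ∧ ∀ g ∈ c 0, ∀ x ∈ N, g * x * g⁻¹ ∈ N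
    exact hc0 ▸ ⟨hNT, hconj⟩
  | succ i => exact hc i (by omega)

theorem map_subtype (hN : Subnormal N H) (K : Subgroup N) (hK : K.Normal) :
    Subnormal (K.map N.subtype) H := by
  refine hN.of_le_of_conj_mem (Subgroup.map_subtype_le K) ?_
  rintro g hg _ ⟨x, hx, rfl⟩
  exact ⟨⟨g, hg⟩ * x * ⟨g, hg⟩⁻¹, hK.conj_mem x hx _, rfl⟩

theorem exists_iteratedCommutator_mem (hN : Subnormal N H) {t : G} (ht : t ∈ N) :
    ∃ m, ∀ u ∈ H, iteratedCommutator t u m ∈ N := by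
  obtain ⟨m, c, hc0, hcm, hc⟩ := hN
  have ht' : ∀ j ≤ m, t ∈ c j := by
    intro j
    induction j with
    | zero => exact fun _ => hc0 ▸ ht
    | succ j ih => exact fun hj => (hc j hj).1 (ih (by omega))
  have key : ∀ k j, j + k = m → ∀ u ∈ H, iteratedCommutator t u k ∈ c j := by
    intro k
    induction k with
    | zero => intro j hj u hu; exact (show j = m by omega) ▸ hcm ▸ hu
    | succ k ih =>
      intro j hj u hu
      have hconj := (hc j (by omega)).2 _ (ih (j + 1) (by omega) u hu) t (ht' j (by omega))
      exact mul_mem hconj (inv_mem (ht' j (by omega)))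
  exact ⟨m, fun u hu => hc0 ▸ key m 0 (by omega) u hu⟩

theorem eq_bot_of_isSolvable
    (habelian : ∀ A : Subgroup G, Subnormal A H → (∀ a ∈ A, ∀ b ∈ A, a * b = b * a) → A = ⊥)
    (hN : Subnormal N H) [Group.IsSolvable N] : N = ⊥ := by
  have step (d : ℕ) (hd : derivedSeries N (d + 1) = ⊥) : derivedSeries N d = ⊥ := by
    have hsub := hN.map_subtype _ (derivedSeries_normal N d)
    refine (Subgroup.map_eq_bot_iff_of_injective _ N.subtype_injective).mp (habelian _ hsub ?_)
    rintro _ ⟨a, ha, rfl⟩ _ ⟨b, hb, rfl⟩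
    have hab := Subgroup.commutator_mem_commutator ha hb
    rw [← derivedSeries_succ, hd, Subgroup.mem_bot,
      commutatorElement_eq_one_iff_mul_comm] at hab
    exact congrArg Subtype.val hab
  obtain ⟨n, hn⟩ := Group.IsSolvable.solvable (G := N)
  have htop : derivedSeries N 0 = ⊥ := by
    induction n with
    | zero => exact hn
    | succ n ih => exact ih (step n hn)
  rw [← N.range_subtype, MonoidHom.range_eq_map, ← derivedSeries_zero, htop, Subgroup.map_bot]

end Subnormal

namespace IteratedAmalgam
variable {G : Type u} [Group G]

theorem exists_mem_Gn_not_mem_Bn (S : IteratedAmalgam G) {t : G} (ht : t ≠ 1) :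
    ∃ n, t ∈ S.Gn n ∧ t ∉ S.Bn n := by
  have hG : Monotone S.Gn := monotone_nat_of_le_succ fun n => (S.amalgam n).A_le
  obtain ⟨p, hp⟩ : ∃ p, t ∈ S.Gn p :=
    (Subgroup.mem_iSup_of_directed hG.directed_le).mp (S.iSup_G ▸ Subgroup.mem_top t)
  obtain ⟨q, hq⟩ : ∃ q, t ∉ S.Bn q := by
    by_contra! h
    exact ht (Subgroup.mem_bot.mp (S.B_iInf ▸ Subgroup.mem_iInf.mpr h))
  exact ⟨max p q, hG (le_max_left p q) hp,
    fun h => hq (antitone_nat_of_succ_le S.B_antitone (le_max_right p q) h)⟩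

theorem eq_bot_of_subnormal_of_mul_comm (S : IteratedAmalgam G) {N : Subgroup G}
    (hN : Subnormal N ⊤) (hcomm : ∀ a ∈ N, ∀ b ∈ N, a * b = b * a) : N = ⊥ := by
  refine (Subgroup.eq_bot_iff_forall N).mpr fun t htN => by_contra fun ht => ?_
  obtain ⟨n, htG, htB⟩ := S.exists_mem_Gn_not_mem_Bn ht
  obtain ⟨c, hcH, hcB⟩ : ∃ c ∈ S.Hn (n + 1), c ∉ S.Bn n :=
    SetLike.exists_of_lt (lt_of_le_of_ne (S.B_le_H_succ n) (S.B_ne_H_succ n))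
  obtain ⟨m, hm⟩ := hN.exists_iteratedCommutator_mem htN
  have hum := hm (c * t * c⁻¹) (Subgroup.mem_top _)
  apply (S.amalgam n).iteratedCommutator_ne_one htG htB hcH hcB (m + 1)
  rw [iteratedCommutator, commutatorElement_eq_one_iff_mul_comm]
  exact hcomm _ hum t htN

end IteratedAmalgam

/-- Every non-trivial subnormal subgroup `T` of `G` is non-abelian and has trivial
radical: every soluble normal subgroup of `T` is trivial. -/
theorem subnormal_nonabelian_and_radical_eq_bot {G : Type u} [Group G]
    (S : IteratedAmalgam G) (T : Subgroup G) (hT : Subnormal T ⊤) (hTbot : T ≠ ⊥) :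
    (∃ a ∈ T, ∃ b ∈ T, a * b ≠ b * a) ∧
    ∀ N : Subgroup G, N ≤ T → (∀ g ∈ T, ∀ x ∈ N, g * x * g⁻¹ ∈ N) →
      IsSolvable ↥N → N = ⊥ := by
  refine ⟨?_, fun N hNT hconj hsolv => ?_⟩
  · by_contra! hcomm
    exact hTbot (S.eq_bot_of_subnormal_of_mul_comm hT hcomm)
  · have : Group.IsSolvable N := hsolv
    exact (hT.of_le_of_conj_mem hNT hconj).eq_bot_of_isSolvable
      (fun A hA => S.eq_bot_of_subnormal_of_mul_comm hA)
end

section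
/- Let p be a prime. Every element x of the unit group ℚ_p^× that is divisible (i.e. for every n ≥ 1 there exists y ∈ ℚ_p^× with yⁿ = x) equals 1. -/
/-!
The valuation of a divisible `x` is divisible by every `n` in `ℤ`, hence `0`, so `x` and all its
roots are units of `ℤ_[p]`. Reducing modulo `p ^ k` gives a divisible element of the finite group
`(ℤ/p^kℤ)ˣ`, which is trivial (take `n` to be the group order). So `x ≡ 1 mod p ^ k` for all `k`.
-/

def IsDivisible {M : Type*} [Monoid M] (x : M) : Prop :=
  ∀ n : ℕ, 0 < n → ∃ y, y ^ n = x

namespace IsDivisible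

variable {M N G : Type*} [Monoid M]

theorem map [Monoid N] {F : Type*} [FunLike F M N] [MonoidHomClass F M N] (f : F) {x : M}
    (hx : IsDivisible x) : IsDivisible (f x) := fun n hn ↦
  let ⟨y, hy⟩ := hx n hn
  ⟨f y, by rw [← map_pow, hy]⟩

theorem eq_one [Group G] [Finite G] {x : G} (hx : IsDivisible x) : x = 1 := by
  obtain ⟨y, rfl⟩ := hx (Nat.card G) Nat.card_pos
  exact pow_card_eq_one'

end IsDivisible

theorem Int.eq_zero_of_forall_natCast_dvd {a : ℤ} (h : ∀ n : ℕ, 0 < n → (n : ℤ) ∣ a) : a = 0 :=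
  Int.eq_zero_of_abs_lt_dvd (h (a.natAbs + 1) a.natAbs.succ_pos) (by rw [Int.abs_eq_natAbs]; omega)

variable {p : ℕ} [Fact p.Prime]

namespace Padic

theorem valuation_eq_zero_of_isDivisible {x : ℚ_[p]ˣ} (hx : IsDivisible x) :
    (x : ℚ_[p]).valuation = 0 :=
  Int.eq_zero_of_forall_natCast_dvd fun n hn ↦
    let ⟨y, hy⟩ := hx n hn
    ⟨(y : ℚ_[p]).valuation, by rw [← hy, Units.val_pow_eq_pow_val, valuation_pow]⟩

theorem norm_eq_one_of_isDivisible {x : ℚ_[p]ˣ} (hx : IsDivisible x) : ‖(x : ℚ_[p])‖ = 1 := by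
  rw [norm_eq_zpow_neg_valuation x.ne_zero, valuation_eq_zero_of_isDivisible hx, neg_zero,
    zpow_zero]

theorem isDivisible_mkUnits {x : ℚ_[p]ˣ} (hx : IsDivisible x) :
    IsDivisible (PadicInt.mkUnits (norm_eq_one_of_isDivisible hx)) := by
  intro n hn
  obtain ⟨y, hy⟩ := hx n hn
  have hy_norm : ‖(y : ℚ_[p])‖ = 1 := by
    refine (pow_eq_one_iff_of_nonneg (norm_nonneg _) hn.ne').mp ?_
    rw [← norm_pow, ← Units.val_pow_eq_pow_val, hy, norm_eq_one_of_isDivisible hx]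
  refine ⟨PadicInt.mkUnits hy_norm, Units.ext (Subtype.ext ?_)⟩
  simp only [Units.val_pow_eq_pow_val, PadicInt.val_mkUnits, ← hy]
  exact PadicInt.coe_pow _ n

end Padic

theorem PadicInt.eq_one_of_isDivisible {u : ℤ_[p]ˣ} (hu : IsDivisible u) : u = 1 := by
  refine Units.ext (ext_of_toZModPow.mp fun k ↦ ?_)
  have h_reduction := (hu.map (Units.map (toZModPow k).toMonoidHom)).eq_one
  simpa using congrArg Units.val h_reduction

/-- Every divisible element of `ℚ_p^×` (an `x` such that for every `n ≥ 1` there is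
`y` with `y ^ n = x`) equals `1`. -/
theorem padic_units_divisible_eq_one (p : ℕ) [Fact p.Prime] (x : ℚ_[p]ˣ)
    (hx : ∀ n : ℕ, 0 < n → ∃ y : ℚ_[p]ˣ, y ^ n = x) :
    x = 1 := by
  have hx : IsDivisible x := hx
  have h_lift := PadicInt.eq_one_of_isDivisible (Padic.isDivisible_mkUnits hx)
  exact Units.ext (congrArg (fun u : ℤ_[p]ˣ ↦ ((u : ℤ_[p]) : ℚ_[p])) h_lift)
end
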